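/- Assume A : S → ℝ^{n×n} is spectrally equivalent to Ā with constants 0 < α ≤ β, ρ > 1 and αρ > 1. Let (σ, t) ∈ S × (0, Λ), let W be a matrix whose columns form a basis of Ē, set K(σ,t) = A(σ) − tM, and let b ∈ ℝⁿ. If (r, η) solves the saddle-point system K(σ,t) r + Ā W η = δA(σ) b and Wᵀ Ā r = 0, then r = Z(σ, t) b. -/

import Mathlib

/-! Write `M = N * N` with `N = √M` and `Ā = N * B * N`. Then `Ā v = ξ M v` iff `B (N v) = ξ (N v)`,
so for `v` in `Ē⊥` the vector `N v` has no component along the eigenvectors of `B` with eigenvalue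
below `ρΛ`, whence `ρΛ vᵀMv ≤ vᵀĀv`. With `α vᵀĀv ≤ vᵀA(σ)v` and `t < Λ < αρΛ` this makes
`K(σ,t) = A(σ) - tM` positive definite on `Ē⊥`, so `W⊥ᵀ K W⊥` is invertible. The second saddle
equation puts `r` in `Ē⊥`, i.e. `r = W⊥ c`, and applying `W⊥ᵀ` to the first one kills `Ā W η`,
leaving `W⊥ᵀ K W⊥ c = W⊥ᵀ δA b`. -/

open Matrix

/-- `Ē`, the span of all eigenvectors `v` of the pencil `(Ā, M)` (`Āv = ξMv`)
with eigenvalue `ξ ∈ (0, c)`. -/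
noncomputable def Ebar {n : ℕ} (Abar M : Matrix (Fin n) (Fin n) ℝ) (c : ℝ) :
    Submodule ℝ (Fin n → ℝ) :=
  Submodule.span ℝ {v : Fin n → ℝ |
    v ≠ 0 ∧ ∃ ξ : ℝ, 0 < ξ ∧ ξ < c ∧ Abar.mulVec v = ξ • M.mulVec v}

/-- The correction operator
`Z(σ,t) = W⊥ (W⊥ᵀ (A(σ) - tM) W⊥)⁻¹ W⊥ᵀ (A(σ) - Ā)`. -/
noncomputable def Zop {n m : ℕ} (Abar M : Matrix (Fin n) (Fin n) ℝ)
    (Wperp : Matrix (Fin n) (Fin m) ℝ) (Aσ : Matrix (Fin n) (Fin n) ℝ) (t : ℝ) :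
    Matrix (Fin n) (Fin n) ℝ :=
  Wperp * (Wperpᵀ * (Aσ - t • M) * Wperp)⁻¹ * Wperpᵀ * (Aσ - Abar)

section Hermitian

variable {ι : Type*} [Fintype ι]

theorem Matrix.IsHermitian.dotProduct_mulVec_comm {A : Matrix ι ι ℝ} (hA : A.IsHermitian)
    (x y : ι → ℝ) : x ⬝ᵥ A *ᵥ y = (A *ᵥ x) ⬝ᵥ y := by
  rw [dotProduct_mulVec, ← mulVec_transpose, (isHermitian_iff_isSymm.mp hA).eq]

theorem OrthonormalBasis.sum_dotProduct_mul_dotProduct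
    (b : OrthonormalBasis ι ℝ (EuclideanSpace ℝ ι)) (x y : ι → ℝ) :
    ∑ i, (⇑(b i) ⬝ᵥ x) * (⇑(b i) ⬝ᵥ y) = x ⬝ᵥ y := by
  simpa [EuclideanSpace.inner_eq_star_dotProduct, dotProduct_comm y] using
    b.sum_inner_mul_inner (WithLp.toLp 2 x) (WithLp.toLp 2 y)

variable [DecidableEq ι] {B : Matrix ι ι ℝ}

theorem Matrix.IsHermitian.dotProduct_mulVec_eq_sum (hB : B.IsHermitian) (w : ι → ℝ) :
    w ⬝ᵥ B *ᵥ w = ∑ i, hB.eigenvalues i * (⇑(hB.eigenvectorBasis i) ⬝ᵥ w) ^ 2 := by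
  rw [← hB.eigenvectorBasis.sum_dotProduct_mul_dotProduct]
  refine Finset.sum_congr rfl fun i _ => ?_
  rw [hB.dotProduct_mulVec_comm, hB.mulVec_eigenvectorBasis, smul_dotProduct, smul_eq_mul]
  ring

theorem Matrix.IsHermitian.mul_dotProduct_self_le (hB : B.IsHermitian) {c : ℝ} {w : ι → ℝ}
    (hw : ∀ i, hB.eigenvalues i < c → ⇑(hB.eigenvectorBasis i) ⬝ᵥ w = 0) :
    c * (w ⬝ᵥ w) ≤ w ⬝ᵥ B *ᵥ w := by
  rw [hB.dotProduct_mulVec_eq_sum, ← hB.eigenvectorBasis.sum_dotProduct_mul_dotProduct,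
    Finset.mul_sum]
  refine Finset.sum_le_sum fun i _ => ?_
  rcases lt_or_ge (hB.eigenvalues i) c with hi | hi
  · simp [hw i hi]
  · rw [← sq]; exact mul_le_mul_of_nonneg_right hi (sq_nonneg _)

open scoped MatrixOrder in
theorem Matrix.PosDef.exists_isHermitian_isUnit_mul_self {M : Matrix ι ι ℝ} (hM : M.PosDef) :
    ∃ N : Matrix ι ι ℝ, N.IsHermitian ∧ IsUnit N ∧ M = N * N := by
  have hM0 : 0 ≤ M := hM.posSemidef.nonneg
  refine ⟨CFC.sqrt M, (CFC.sqrt_nonneg M).posSemidef.1, ?_, (CFC.sqrt_mul_sqrt_self M hM0).symm⟩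
  exact (CFC.isUnit_sqrt_iff M hM0).2 hM.isUnit

theorem Matrix.PosDef.exists_posDef_eq_mul_mul {A N : Matrix ι ι ℝ} (hA : A.PosDef)
    (hN : N.IsHermitian) (hNu : IsUnit N) : ∃ B : Matrix ι ι ℝ, B.PosDef ∧ A = N * B * N := by
  have hdet : IsUnit N.det := (isUnit_iff_isUnit_det N).1 hNu
  have hinj : Function.Injective N⁻¹.mulVec :=
    mulVec_injective_iff_isUnit.2 (isUnit_nonsing_inv_iff.2 hNu)
  refine ⟨N⁻¹ * A * N⁻¹, ?_, ?_⟩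
  · have := hA.conjTranspose_mul_mul_same hinj
    rwa [hN.inv.eq] at this
  · rw [← mul_assoc, ← mul_assoc, mul_nonsing_inv _ hdet, one_mul, mul_assoc,
      nonsing_inv_mul _ hdet, mul_one]

end Hermitian

section Pencil

variable {n : ℕ} {M Abar : Matrix (Fin n) (Fin n) ℝ}

theorem mul_dotProduct_mulVec_le_of_orthogonal_Ebar (hM : M.PosDef) (hAbar : Abar.PosDef)
    {c : ℝ} {v : Fin n → ℝ} (hv : ∀ w ∈ Ebar Abar M c, v ⬝ᵥ Abar *ᵥ w = 0) :
    c * (v ⬝ᵥ M *ᵥ v) ≤ v ⬝ᵥ Abar *ᵥ v := by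
  obtain ⟨N, hN, hNu, rfl⟩ := hM.exists_isHermitian_isUnit_mul_self
  obtain ⟨B, hB, rfl⟩ := hAbar.exists_posDef_eq_mul_mul hN hNu
  have hcongr : ∀ (C : Matrix (Fin n) (Fin n) ℝ) (x y : Fin n → ℝ),
      x ⬝ᵥ (N * C * N) *ᵥ y = (N *ᵥ x) ⬝ᵥ C *ᵥ (N *ᵥ y) := fun C x y => by
    rw [← mulVec_mulVec, ← mulVec_mulVec, hN.dotProduct_mulVec_comm]
  rw [hcongr, show N * N = N * 1 * N by rw [mul_one], hcongr, one_mulVec]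
  refine hB.1.mul_dotProduct_self_le fun i hi => ?_
  set u : Fin n → ℝ := ⇑(hB.1.eigenvectorBasis i)
  have hu : N *ᵥ (N⁻¹ *ᵥ u) = u := by
    rw [mulVec_mulVec, mul_nonsing_inv _ ((isUnit_iff_isUnit_det N).1 hNu), one_mulVec]
  have hmem : N⁻¹ *ᵥ u ∈ Ebar (N * B * N) (N * N) c := by
    refine Submodule.subset_span ⟨fun h => ?_, _, hB.eigenvalues_pos i, hi, ?_⟩
    · refine hB.1.eigenvectorBasis.orthonormal.ne_zero i (WithLp.ofLp_injective 2 ?_)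
      rw [WithLp.ofLp_zero]
      change u = 0
      rw [← hu, h, mulVec_zero]
    · rw [← mulVec_mulVec, ← mulVec_mulVec, hu, hB.1.mulVec_eigenvectorBasis, mulVec_smul,
        ← mulVec_mulVec, hu]
  have horth := hv _ hmem
  rw [hcongr, hu, hB.1.mulVec_eigenvectorBasis, dotProduct_smul, smul_eq_mul] at horth
  rw [dotProduct_comm]
  exact (mul_eq_zero.1 horth).resolve_left (hB.eigenvalues_pos i).ne'

end Pencil

section Projection

variable {ι κ : Type*} [Fintype ι] [Fintype κ]

theorem dotProduct_sub_smul_mulVec_pos {A Abar M : Matrix ι ι ℝ} (hM : M.PosDef) {α c t : ℝ}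
    (hα : 0 < α) (htc : t < α * c) {z : ι → ℝ} (hz : z ≠ 0)
    (hαA : α * (z ⬝ᵥ Abar *ᵥ z) ≤ z ⬝ᵥ A *ᵥ z) (hcM : c * (z ⬝ᵥ M *ᵥ z) ≤ z ⬝ᵥ Abar *ᵥ z) :
    0 < z ⬝ᵥ (A - t • M) *ᵥ z := by
  have hMz : 0 < z ⬝ᵥ M *ᵥ z := by simpa using hM.dotProduct_mulVec_pos hz
  rw [sub_mulVec, dotProduct_sub, smul_mulVec, dotProduct_smul, smul_eq_mul]
  nlinarith [mul_le_mul_of_nonneg_left hcM hα.le]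

theorem Matrix.posDef_transpose_mul_mul_of_pos {K : Matrix ι ι ℝ} (hK : K.IsHermitian)
    (P : Matrix ι κ ℝ) (hpos : ∀ c, c ≠ 0 → 0 < (P *ᵥ c) ⬝ᵥ K *ᵥ (P *ᵥ c)) :
    (Pᵀ * K * P).PosDef := by
  refine .of_dotProduct_mulVec_pos ?_ fun c hc => ?_
  · simpa using isHermitian_conjTranspose_mul_mul P hK
  · simpa [← mulVec_mulVec, dotProduct_mulVec _ Pᵀ, vecMul_transpose] using hpos c hc

end Projection

theorem stmt_9_general {n m p d : ℕ} (S : Set (Fin d → ℝ)) (M Abar : Matrix (Fin n) (Fin n) ℝ)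
    (hM : M.PosDef) (hAbar : Abar.PosDef)
    (A : (Fin d → ℝ) → Matrix (Fin n) (Fin n) ℝ) (hApd : ∀ σ ∈ S, (A σ).PosDef)
    (α β Λ ρ : ℝ) (hα : 0 < α) (hαρ : 1 < α * ρ)
    (hspec : ∀ σ ∈ S, ∀ v : Fin n → ℝ,
      α * (v ⬝ᵥ Abar.mulVec v) ≤ v ⬝ᵥ (A σ).mulVec v ∧
        v ⬝ᵥ (A σ).mulVec v ≤ β * (v ⬝ᵥ Abar.mulVec v))
    -- `W⊥`: columns form a basis of `Ē⊥`
    (Wperp : Matrix (Fin n) (Fin m) ℝ)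
    (hWpmem : ∀ j, ∀ w ∈ Ebar Abar M (ρ * Λ), (fun i => Wperp i j) ⬝ᵥ Abar.mulVec w = 0)
    (hWpspan : ∀ v : Fin n → ℝ,
      (∀ w ∈ Ebar Abar M (ρ * Λ), v ⬝ᵥ Abar.mulVec w = 0) → ∃ c, v = Wperp.mulVec c)
    (hWpli : ∀ c : Fin m → ℝ, Wperp.mulVec c = 0 → c = 0)
    -- `W`: columns form a basis of `Ē`
    (W : Matrix (Fin n) (Fin p) ℝ)
    (hWmem : ∀ j, (fun i => W i j) ∈ Ebar Abar M (ρ * Λ))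
    (hWspan : ∀ v ∈ Ebar Abar M (ρ * Λ), ∃ c, v = W.mulVec c)
    (σ : Fin d → ℝ) (hσ : σ ∈ S) (t : ℝ) (ht : t ∈ Set.Ioo 0 Λ)
    (b r : Fin n → ℝ) (η : Fin p → ℝ)
    (hsaddle1 : (A σ - t • M).mulVec r + Abar.mulVec (W.mulVec η) =
      (A σ - Abar).mulVec b)
    (hsaddle2 : Wᵀ.mulVec (Abar.mulVec r) = 0) :
    r = (Zop Abar M Wperp (A σ) t).mulVec b := by
  have hWperp_ann : ∀ w ∈ Ebar Abar M (ρ * Λ), Wperpᵀ *ᵥ (Abar *ᵥ w) = 0 :=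
    fun w hw => funext fun j => hWpmem j w hw
  have hr_perp : ∀ w ∈ Ebar Abar M (ρ * Λ), r ⬝ᵥ Abar *ᵥ w = 0 := by
    intro w hw
    obtain ⟨e, rfl⟩ := hWspan w hw
    rw [hAbar.1.dotProduct_mulVec_comm, ← dotProduct_transpose_mulVec, hsaddle2, dotProduct_zero]
  obtain ⟨c, rfl⟩ := hWpspan r hr_perp
  have hWη : W *ᵥ η ∈ Ebar Abar M (ρ * Λ) :=
    Submodule.span_le.2 (Set.range_subset_iff.2 hWmem) (W.range_mulVecLin ▸ ⟨η, rfl⟩)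
  have hproj : (Wperpᵀ * (A σ - t • M) * Wperp) *ᵥ c = Wperpᵀ *ᵥ ((A σ - Abar) *ᵥ b) := by
    simpa [← mulVec_mulVec, mulVec_add, hWperp_ann _ hWη] using congrArg (Wperpᵀ *ᵥ ·) hsaddle1
  have hK : (Wperpᵀ * (A σ - t • M) * Wperp).PosDef := by
    have hKH : (A σ - t • M).IsHermitian := (hApd σ hσ).1.sub (hM.1.smul (.all t))
    refine posDef_transpose_mul_mul_of_pos hKH Wperp fun e he => ?_
    refine dotProduct_sub_smul_mulVec_pos hM hα ?_ (fun h => he (hWpli e h)) (hspec σ hσ _).1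
      (mul_dotProduct_mulVec_le_of_orthogonal_Ebar (c := ρ * Λ) hM hAbar fun w hw => ?_)
    · nlinarith [ht.1, ht.2]
    · rw [dotProduct_comm, ← dotProduct_transpose_mulVec, hWperp_ann w hw, dotProduct_zero]
  rw [Zop, ← mulVec_mulVec, ← mulVec_mulVec, ← mulVec_mulVec, ← hproj, mulVec_mulVec c,
    nonsing_inv_mul _ ((isUnit_iff_isUnit_det _).1 hK.isUnit), one_mulVec]

/-- if `(r, η)` solves the saddle-point system
`K(σ,t) r + Ā W η = δA(σ) b`, `Wᵀ Ā r = 0`, where `K(σ,t) = A(σ) - tM` and the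
columns of `W` form a basis of `Ē`, then `r = Z(σ,t) b`. -/
theorem stmt_9 {n m p d : ℕ} (S : Set (Fin d → ℝ)) (M Abar : Matrix (Fin n) (Fin n) ℝ)
    (hM : M.PosDef) (hAbar : Abar.PosDef)
    (A : (Fin d → ℝ) → Matrix (Fin n) (Fin n) ℝ) (hApd : ∀ σ ∈ S, (A σ).PosDef)
    (α β Λ ρ : ℝ) (hα : 0 < α) (hαβ : α ≤ β) (hΛ : 0 < Λ) (hρ : 1 < ρ) (hαρ : 1 < α * ρ)
    (hspec : ∀ σ ∈ S, ∀ v : Fin n → ℝ,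
      α * (v ⬝ᵥ Abar.mulVec v) ≤ v ⬝ᵥ (A σ).mulVec v ∧
        v ⬝ᵥ (A σ).mulVec v ≤ β * (v ⬝ᵥ Abar.mulVec v))
    -- `W⊥`: columns form a basis of `Ē⊥`
    (Wperp : Matrix (Fin n) (Fin m) ℝ)
    (hWpmem : ∀ j, ∀ w ∈ Ebar Abar M (ρ * Λ), (fun i => Wperp i j) ⬝ᵥ Abar.mulVec w = 0)
    (hWpspan : ∀ v : Fin n → ℝ,
      (∀ w ∈ Ebar Abar M (ρ * Λ), v ⬝ᵥ Abar.mulVec w = 0) → ∃ c, v = Wperp.mulVec c)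
    (hWpli : ∀ c : Fin m → ℝ, Wperp.mulVec c = 0 → c = 0)
    -- `W`: columns form a basis of `Ē`
    (W : Matrix (Fin n) (Fin p) ℝ)
    (hWmem : ∀ j, (fun i => W i j) ∈ Ebar Abar M (ρ * Λ))
    (hWspan : ∀ v ∈ Ebar Abar M (ρ * Λ), ∃ c, v = W.mulVec c)
    (hWli : ∀ c : Fin p → ℝ, W.mulVec c = 0 → c = 0)
    (σ : Fin d → ℝ) (hσ : σ ∈ S) (t : ℝ) (ht : t ∈ Set.Ioo 0 Λ)
    (b r : Fin n → ℝ) (η : Fin p → ℝ)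
    (hsaddle1 : (A σ - t • M).mulVec r + Abar.mulVec (W.mulVec η) =
      (A σ - Abar).mulVec b)
    (hsaddle2 : Wᵀ.mulVec (Abar.mulVec r) = 0) :
    r = (Zop Abar M Wperp (A σ) t).mulVec b :=
  stmt_9_general S M Abar hM hAbar A hApd α β Λ ρ hα hαρ hspec Wperp hWpmem hWpspan hWpli W hWmem
    hWspan σ hσ t ht b r η hsaddle1 hsaddle2
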